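/- Let 0 < ε ≤ 1/2 and B be the 3×3 matrix with columns b₁ = (ε/2, ε/2, -ε), b₂ = (5ε/4, -3ε/4, -ε/2), b₃ = (1/(3ε²), 1/(3ε²), 1/(3ε²)), and Λ₂ = Bℤ³, Π = [-ε,ε]³. Then μ₁(Π, Λ₂) = 1 and μ₂(Π, Λ₂) = 5/4. -/

import Mathlib

/-
The third column of `B` is long compared with `Π`: the three coordinates of
`B(m, n, k)` sum to `k / ε²`, so a lattice point in `μΠ` with `μ < 5/4` has
`|k| ≤ 3με³ < 1`, i.e. `k = 0`.
On the plane `k = 0` the lattice is spanned by `b₁ = ε(1/2, 1/2, -1)` and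
`b₂ = ε(5/4, -3/4, -1/2)`; scaling by `4/ε` turns membership in `μΠ` into the integer
conditions `|2m + 5n|, |2m - 3n|, |4m + 2n| ≤ 4μ`, and for `4μ < 5` the first two force
`n = 0`. Hence below `5/4` only multiples of `b₁` lie in `μΠ`, and below `1` only `0`;
`b₁ ∈ Π` and `b₂ ∈ (5/4)Π` show that both bounds are attained.
-/

open Matrix
open scoped BigOperators Pointwise

/-- The successive minimum `μ_k(M, Bℤ³)`. -/
noncomputable def succMin (k : ℕ) (B : Matrix (Fin 3) (Fin 3) ℝ)
    (M : Set (Fin 3 → ℝ)) : ℝ :=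
  sInf {μ : ℝ | 0 < μ ∧ ∃ w : Fin k → (Fin 3 → ℤ),
    LinearIndependent ℝ (fun i => B.mulVec (fun j => ((w i j : ℝ)))) ∧
    ∀ i, B.mulVec (fun j => ((w i j : ℝ))) ∈ μ • M}

theorem succMin_eq_of_forall_not_linearIndependent {k : ℕ} {B : Matrix (Fin 3) (Fin 3) ℝ}
    {M : Set (Fin 3 → ℝ)} {μ₀ : ℝ} (hμ₀ : 0 < μ₀) (w₀ : Fin k → Fin 3 → ℤ)
    (hw₀ : LinearIndependent ℝ (fun i => B.mulVec (fun j => ((w₀ i j : ℝ)))))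
    (hw₀M : ∀ i, B.mulVec (fun j => ((w₀ i j : ℝ))) ∈ μ₀ • M)
    (hmin : ∀ μ, 0 < μ → μ < μ₀ → ∀ w : Fin k → Fin 3 → ℤ,
      (∀ i, B.mulVec (fun j => ((w i j : ℝ))) ∈ μ • M) →
      ¬ LinearIndependent ℝ (fun i => B.mulVec (fun j => ((w i j : ℝ))))) :
    succMin k B M = μ₀ :=
  IsLeast.csInf_eq ⟨⟨hμ₀, w₀, hw₀, hw₀M⟩, fun _ ⟨hμ, w, hw, hwM⟩ =>
    not_lt.mp fun hlt => hmin _ hμ hlt w hwM hw⟩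

theorem not_linearIndependent_of_forall_eq_smul {R M : Type*} [CommRing R] [Nontrivial R]
    [AddCommGroup M] [Module R M] (v : Fin 2 → M) (b : M) (c : Fin 2 → R)
    (hv : ∀ i, v i = c i • b) : ¬ LinearIndependent R v := by
  intro hli
  have hc := Fintype.linearIndependent_iff.mp hli ![c 1, -c 0] (by
    simp only [Fin.sum_univ_two, hv, smul_smul]
    simp [mul_comm])
  exact hli.ne_zero 0 (by rw [hv 0, show c 0 = 0 by simpa using hc 1, zero_smul])

def cube {ι : Type*} (ε : ℝ) : Set (ι → ℝ) := {z | ∀ i, |z i| ≤ ε}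

theorem mem_smul_cube_iff {ι : Type*} {ε μ : ℝ} (hμ : 0 < μ) (x : ι → ℝ) :
    x ∈ μ • cube ε ↔ ∀ i, |x i| ≤ μ * ε := by
  simp only [Set.mem_smul_set_iff_inv_smul_mem₀ hμ.ne', cube, Set.mem_ofPred_eq,
    Pi.smul_apply, smul_eq_mul, abs_mul, abs_inv, abs_of_pos hμ, inv_mul_le_iff₀ hμ]

noncomputable def exampleBasis (ε : ℝ) : Matrix (Fin 3) (Fin 3) ℝ :=
  !![ε/2, 5*ε/4,  1/(3*ε^2);
     ε/2, -3*ε/4, 1/(3*ε^2);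
     -ε,  -ε/2,   1/(3*ε^2)]

section exampleBasis

variable {ε μ : ℝ}

theorem exampleBasis_mulVec (hε : 0 < ε) (x : Fin 3 → ℝ) :
    exampleBasis ε *ᵥ x = ε • ![x 0 / 2 + 5 * x 1 / 4 + x 2 / (3 * ε ^ 3),
      x 0 / 2 - 3 * x 1 / 4 + x 2 / (3 * ε ^ 3), -x 0 - x 1 / 2 + x 2 / (3 * ε ^ 3)] := by
  ext i
  fin_cases i <;>
    simp [exampleBasis, mulVec, dotProduct, Fin.sum_univ_three] <;> field_simp <;> ring

theorem exampleBasis_mulVec_mem_smul_cube_iff (hε : 0 < ε) (hμ : 0 < μ) (x : Fin 3 → ℝ) :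
    exampleBasis ε *ᵥ x ∈ μ • cube ε ↔
      |x 0 / 2 + 5 * x 1 / 4 + x 2 / (3 * ε ^ 3)| ≤ μ ∧
      |x 0 / 2 - 3 * x 1 / 4 + x 2 / (3 * ε ^ 3)| ≤ μ ∧
      |-x 0 - x 1 / 2 + x 2 / (3 * ε ^ 3)| ≤ μ := by
  simp [mem_smul_cube_iff hμ, exampleBasis_mulVec hε, Fin.forall_fin_succ, abs_mul,
    abs_of_pos hε, mul_comm _ ε, hε]

theorem exampleBasis_lattice_coord_two_eq_zero (hε : 0 < ε) (hμ : 0 < μ)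
    (hμε : μ < 1 / (3 * ε ^ 3)) (z : Fin 3 → ℤ)
    (hz : exampleBasis ε *ᵥ (fun j => (z j : ℝ)) ∈ μ • cube ε) : z 2 = 0 := by
  obtain ⟨h0, h1, h2⟩ := (exampleBasis_mulVec_mem_smul_cube_iff hε hμ _).mp hz
  have hε3 : 0 < 3 * ε ^ 3 := by positivity
  have ht : |(z 2 : ℝ) / (3 * ε ^ 3)| ≤ μ := by
    rw [abs_le] at h0 h1 h2 ⊢
    constructor <;> linarith
  have hlt : |(z 2 : ℝ)| < 1 := calc
    |(z 2 : ℝ)| = 3 * ε ^ 3 * |(z 2 : ℝ) / (3 * ε ^ 3)| := by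
      rw [abs_div, abs_of_pos hε3]; field_simp
    _ ≤ 3 * ε ^ 3 * μ := by gcongr
    _ < 1 := by rwa [lt_div_iff₀ hε3, mul_comm] at hμε
  exact Int.abs_lt_one_iff.mp (by exact_mod_cast hlt)

theorem exampleBasis_lattice_coord_one_eq_zero (hε : 0 < ε) (hε_le : ε ≤ 1 / 2) (hμ : 0 < μ)
    (hμ_lt : μ < 5 / 4) (z : Fin 3 → ℤ)
    (hz : exampleBasis ε *ᵥ (fun j => (z j : ℝ)) ∈ μ • cube ε) :
    z 1 = 0 ∧ z 2 = 0 := by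
  have hz2 : z 2 = 0 := by
    refine exampleBasis_lattice_coord_two_eq_zero hε hμ ?_ z hz
    have : ε ^ 3 ≤ (1 / 2) ^ 3 := by gcongr
    rw [lt_div_iff₀ (by positivity)]
    nlinarith
  obtain ⟨h0, h1, -⟩ := (exampleBasis_mulVec_mem_smul_cube_iff hε hμ _).mp hz
  simp only [hz2, Int.cast_zero, zero_div, add_zero, abs_le] at h0 h1
  have : 2 * z 0 + 5 * z 1 < 5 := by exact_mod_cast (by linarith : (2 * z 0 + 5 * z 1 : ℝ) < 5)
  have : -5 < 2 * z 0 + 5 * z 1 := by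
    exact_mod_cast (by linarith : (-5 : ℝ) < 2 * z 0 + 5 * z 1)
  have : 2 * z 0 - 3 * z 1 < 5 := by exact_mod_cast (by linarith : (2 * z 0 - 3 * z 1 : ℝ) < 5)
  have : -5 < 2 * z 0 - 3 * z 1 := by
    exact_mod_cast (by linarith : (-5 : ℝ) < 2 * z 0 - 3 * z 1)
  refine ⟨?_, hz2⟩
  obtain ⟨hlo, hhi⟩ : -1 ≤ z 1 ∧ z 1 ≤ 1 := by omega
  interval_cases h : z 1 <;> omega

theorem exampleBasis_lattice_eq_zero (hε : 0 < ε) (hε_le : ε ≤ 1 / 2) (hμ : 0 < μ)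
    (hμ_lt : μ < 1) (z : Fin 3 → ℤ)
    (hz : exampleBasis ε *ᵥ (fun j => (z j : ℝ)) ∈ μ • cube ε) : z = 0 := by
  obtain ⟨hz1, hz2⟩ := exampleBasis_lattice_coord_one_eq_zero hε hε_le hμ (by linarith) z hz
  obtain ⟨-, -, h2⟩ := (exampleBasis_mulVec_mem_smul_cube_iff hε hμ _).mp hz
  simp only [hz1, hz2, Int.cast_zero, zero_div, add_zero, sub_zero, abs_neg] at h2
  have hz0 : z 0 = 0 := Int.abs_lt_one_iff.mp (by exact_mod_cast h2.trans_lt hμ_lt)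
  ext j
  fin_cases j <;> assumption

theorem exampleBasis_lattice_eq_smul_col_zero (hε : 0 < ε) (hε_le : ε ≤ 1 / 2) (hμ : 0 < μ)
    (hμ_lt : μ < 5 / 4) (z : Fin 3 → ℤ)
    (hz : exampleBasis ε *ᵥ (fun j => (z j : ℝ)) ∈ μ • cube ε) :
    exampleBasis ε *ᵥ (fun j => (z j : ℝ)) = (z 0 : ℝ) • (exampleBasis ε).col 0 := by
  obtain ⟨hz1, hz2⟩ := exampleBasis_lattice_coord_one_eq_zero hε hε_le hμ hμ_lt z hz
  have : (fun j => (z j : ℝ)) = Pi.single 0 (z 0 : ℝ) := by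
    ext j
    fin_cases j <;> simp [hz1, hz2]
  rw [this, mulVec_single]
  ext i
  simp [mul_comm]

end exampleBasis

/-- For `0 < ε ≤ 1/2` and the explicit matrix `B` with columns
`(ε/2, ε/2, -ε)`, `(5ε/4, -3ε/4, -ε/2)`, `(1/(3ε²), 1/(3ε²), 1/(3ε²))`,
the cube `Π = [-ε,ε]³` satisfies `μ₁(Π, Bℤ³) = 1` and `μ₂(Π, Bℤ³) = 5/4`. -/
theorem stmt_15 (ε : ℝ) (hε0 : 0 < ε) (hε : ε ≤ 1/2) :
    succMin 1
        !![ε/2, 5*ε/4,  1/(3*ε^2);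
           ε/2, -3*ε/4, 1/(3*ε^2);
           -ε,  -ε/2,   1/(3*ε^2)]
        {z : Fin 3 → ℝ | ∀ i, |z i| ≤ ε} = 1 ∧
      succMin 2
        !![ε/2, 5*ε/4,  1/(3*ε^2);
           ε/2, -3*ε/4, 1/(3*ε^2);
           -ε,  -ε/2,   1/(3*ε^2)]
        {z : Fin 3 → ℝ | ∀ i, |z i| ≤ ε} = 5/4 := by
  change succMin 1 (exampleBasis ε) (cube ε) = 1 ∧ succMin 2 (exampleBasis ε) (cube ε) = 5 / 4
  constructor
  · refine succMin_eq_of_forall_not_linearIndependent one_pos ![![1, 0, 0]] ?_ ?_ ?_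
    · rw [linearIndependent_unique_iff, exampleBasis_mulVec hε0]
      simp [hε0.ne']
    · intro i
      rw [exampleBasis_mulVec_mem_smul_cube_iff hε0 one_pos]
      norm_num [Matrix.cons_val_two]
    · intro μ hμ hμ_lt w hw hli
      refine hli.ne_zero 0 ?_
      simp [exampleBasis_lattice_eq_zero hε0 hε hμ hμ_lt _ (hw 0), ← Pi.zero_def]
  · refine succMin_eq_of_forall_not_linearIndependent (by norm_num) ![![1, 0, 0], ![0, 1, 0]]
      ?_ ?_ ?_
    · rw [Fintype.linearIndependent_iff]
      intro g hg
      obtain ⟨h0, h1, -⟩ : g 0 * (ε * 2⁻¹) + g 1 * (ε * (5 / 4)) = 0 ∧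
          g 0 * (ε * 2⁻¹) + -(g 1 * (ε * (3 / 4))) = 0 ∧ _ := by
        simpa [exampleBasis_mulVec hε0, funext_iff, Fin.forall_fin_succ] using hg
      have hg1 : ε * g 1 = 0 := by linarith
      have hg0 : ε * g 0 = 0 := by linarith
      simp_all [hε0.ne', Fin.forall_fin_two]
    · intro i
      fin_cases i <;> rw [exampleBasis_mulVec_mem_smul_cube_iff hε0 (by norm_num)] <;>
        norm_num [Matrix.cons_val_two]
    · intro μ hμ hμ_lt w hw
      exact not_linearIndependent_of_forall_eq_smul _ _ _ fun i =>
        exampleBasis_lattice_eq_smul_col_zero hε0 hε hμ hμ_lt _ (hw i)
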